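/- Cardy's function satisfies the duality cardy(s) + cardy(1-s) = 1 for all s ∈ (0,1), where cardy(s) = (Γ(2/3)/(Γ(4/3)Γ(1/3))) · s^{1/3} · ₂F₁(1/3,2/3;4/3;s). -/

import Mathlib

open scoped Nat

/-- The Gauss hypergeometric function ₂F₁(a,b;c;s) defined by its series (real). -/
noncomputable def hyp2F1 (a b c s : ℝ) : ℝ :=
  ∑' n : ℕ, (ascPochhammer ℝ n).eval a * (ascPochhammer ℝ n).eval b /
      ((ascPochhammer ℝ n).eval c * (n ! : ℝ)) * s ^ n

/-- Cardy's crossing-probability formula. -/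
noncomputable def cardy (s : ℝ) : ℝ :=
  Real.Gamma (2/3) / (Real.Gamma (4/3) * Real.Gamma (1/3)) *
    s ^ ((1:ℝ)/3) * hyp2F1 (1/3) (2/3) (4/3) s

open scoped Nat

noncomputable def bseq (n : ℕ) : ℝ := (ascPochhammer ℝ n).eval (2/3) / (n ! : ℝ)

noncomputable def aseq (n : ℕ) : ℝ :=
  (ascPochhammer ℝ n).eval (1/3) * (ascPochhammer ℝ n).eval (2/3) /
    ((ascPochhammer ℝ n).eval (4/3) * (n ! : ℝ))

lemma asc_mono {x y : ℝ} (hx : 0 < x) (hxy : x ≤ y) (n : ℕ) :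
    (ascPochhammer ℝ n).eval x ≤ (ascPochhammer ℝ n).eval y := by
  induction n with
  | zero => simp
  | succ n ih =>
    rw [ascPochhammer_succ_eval, ascPochhammer_succ_eval]
    have h1 := ascPochhammer_pos n x hx
    have h2 : (0:ℝ) ≤ x + n := by positivity
    nlinarith [ascPochhammer_pos n y (lt_of_lt_of_le hx hxy)]

lemma asc_one (n : ℕ) : (ascPochhammer ℝ n).eval 1 = (n ! : ℝ) := by
  induction n with
  | zero => simp
  | succ n ih =>
    rw [ascPochhammer_succ_eval, ih, Nat.factorial_succ]
    push_cast; ring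

lemma bseq_nonneg (n : ℕ) : 0 ≤ bseq n := by
  have := ascPochhammer_pos n (2/3 : ℝ) (by norm_num)
  have : (0:ℝ) < n ! := by positivity
  unfold bseq; positivity

lemma bseq_le_one (n : ℕ) : bseq n ≤ 1 := by
  unfold bseq
  rw [div_le_one (by positivity)]
  calc (ascPochhammer ℝ n).eval (2/3) ≤ (ascPochhammer ℝ n).eval 1 :=
        asc_mono (by norm_num) (by norm_num) n
    _ = (n ! : ℝ) := asc_one n

lemma bseq_abs (n : ℕ) : |bseq n| ≤ 1 := by
  rw [abs_of_nonneg (bseq_nonneg n)]; exact bseq_le_one n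

lemma aseq_nonneg (n : ℕ) : 0 ≤ aseq n := by
  have h1 := ascPochhammer_pos n (1/3 : ℝ) (by norm_num)
  have h2 := ascPochhammer_pos n (2/3 : ℝ) (by norm_num)
  have h3 := ascPochhammer_pos n (4/3 : ℝ) (by norm_num)
  have h4 : (0:ℝ) < n ! := by positivity
  unfold aseq; positivity

lemma aseq_le_one (n : ℕ) : aseq n ≤ 1 := by
  have h1 := ascPochhammer_pos n (1/3 : ℝ) (by norm_num)
  have h2 := ascPochhammer_pos n (2/3 : ℝ) (by norm_num)
  have h3 := ascPochhammer_pos n (4/3 : ℝ) (by norm_num)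
  have h4 : (0:ℝ) < n ! := by positivity
  unfold aseq
  rw [div_le_one (by positivity)]
  have e1 : (ascPochhammer ℝ n).eval (1/3:ℝ) ≤ (ascPochhammer ℝ n).eval (4/3:ℝ) :=
    asc_mono (by norm_num) (by norm_num) n
  have e2 : (ascPochhammer ℝ n).eval (2/3:ℝ) ≤ (n ! : ℝ) := by
    rw [← asc_one n]; exact asc_mono (by norm_num) (by norm_num) n
  nlinarith

lemma aseq_abs (n : ℕ) : |aseq n| ≤ 1 := by
  rw [abs_of_nonneg (aseq_nonneg n)]; exact aseq_le_one n

/-- key: (1/3 + n) * aseq n = (1/3) * bseq n -/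
lemma asc_third (n : ℕ) :
    (ascPochhammer ℝ n).eval (1/3) * (1/3 + n) = 1/3 * (ascPochhammer ℝ n).eval (4/3) := by
  induction n with
  | zero => simp
  | succ n ih =>
    rw [ascPochhammer_succ_eval, ascPochhammer_succ_eval]
    push_cast
    nlinarith [ih]

lemma aseq_key (n : ℕ) : (1/3 + n) * aseq n = 1/3 * bseq n := by
  have h3 := ascPochhammer_pos n (4/3 : ℝ) (by norm_num)
  have h4 : (0:ℝ) < n ! := by positivity
  have := asc_third n
  unfold aseq bseq
  field_simp
  linear_combination (3 * Polynomial.eval (2/3) (ascPochhammer ℝ n)) * this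

lemma bseq_rec (n : ℕ) : (n + 1 : ℝ) * bseq (n + 1) = (2/3 + n) * bseq n := by
  unfold bseq
  rw [ascPochhammer_succ_eval, Nat.factorial_succ]
  have h4 : (0:ℝ) < n ! := by positivity
  push_cast
  field_simp

section Series
variable {c : ℕ → ℝ}

lemma summable_series (hc : ∀ n, |c n| ≤ 1) {t : ℝ} (ht : |t| < 1) :
    Summable (fun n : ℕ => c n * t ^ n) := by
  refine Summable.of_norm_bounded (summable_geometric_of_lt_one (abs_nonneg t) ht) ?_
  intro n
  rw [norm_mul, norm_pow]
  calc ‖c n‖ * ‖t‖ ^ n ≤ 1 * |t| ^ n := by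
        apply mul_le_mul_of_nonneg_right (hc n) (by positivity)
    _ = |t| ^ n := one_mul _

lemma summable_nat_mul_geom {r : ℝ} (hr0 : 0 < r) (hr1 : r < 1) :
    Summable (fun n : ℕ => (n : ℝ) * r ^ (n - 1)) := by
  have h1 : Summable (fun n : ℕ => (n : ℝ) ^ 1 * r ^ n) :=
    summable_pow_mul_geometric_of_norm_lt_one 1
      (by rw [Real.norm_eq_abs, abs_of_nonneg hr0.le]; exact hr1)
  refine (h1.mul_right r⁻¹).of_nonneg_of_le (fun n => by positivity) ?_
  intro n
  match n with
  | 0 => simp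
  | (m+1) =>
    rw [Nat.add_sub_cancel, pow_one, pow_succ, mul_assoc, mul_assoc,
      mul_inv_cancel₀ hr0.ne', mul_one]

lemma summable_deriv_series (hc : ∀ n, |c n| ≤ 1) {t r : ℝ} (htr : |t| ≤ r) (hr0 : 0 < r)
    (hr : r < 1) :
    Summable (fun n : ℕ => c n * (n * t ^ (n - 1))) := by
  refine (summable_nat_mul_geom hr0 hr).of_norm_bounded ?_
  intro n
  rw [norm_mul, norm_mul, Real.norm_natCast, norm_pow]
  calc ‖c n‖ * ((n:ℝ) * ‖t‖ ^ (n-1)) ≤ 1 * ((n:ℝ) * r ^ (n-1)) := by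
        apply mul_le_mul (hc n)
        · exact mul_le_mul_of_nonneg_left (pow_le_pow_left₀ (abs_nonneg t) htr _)
            (Nat.cast_nonneg n)
        · positivity
        · norm_num
    _ = (n:ℝ) * r ^ (n-1) := one_mul _

lemma hasDerivAt_series (hc : ∀ n, |c n| ≤ 1) {t : ℝ} (ht : |t| < 1) :
    HasDerivAt (fun x : ℝ => ∑' n : ℕ, c n * x ^ n)
      (∑' n : ℕ, c n * (n * t ^ (n - 1))) t := by
  set r : ℝ := (|t| + 1) / 2 with hrdef
  have hr0 : 0 < r := by positivity
  have hr1 : r < 1 := by rw [hrdef]; linarith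
  have htr : |t| < r := by rw [hrdef]; linarith
  refine hasDerivAt_tsum_of_isPreconnected (summable_nat_mul_geom hr0 hr1)
      (Metric.isOpen_ball (x := (0:ℝ)) (ε := r))
      ((convex_ball (0:ℝ) r).isPreconnected) (g := fun n x => c n * x ^ n)
      (g' := fun n x => c n * ((n:ℝ) * x ^ (n-1))) (y₀ := 0) ?_ ?_ ?_ ?_ ?_
  · intro n y _
    exact (hasDerivAt_pow n y).const_mul (c n)
  · intro n y hy
    rw [Metric.mem_ball, dist_zero_right, Real.norm_eq_abs] at hy
    rw [norm_mul, norm_mul, Real.norm_natCast, norm_pow, Real.norm_eq_abs, Real.norm_eq_abs]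
    calc |c n| * ((n:ℝ) * |y| ^ (n-1)) ≤ 1 * ((n:ℝ) * r ^ (n-1)) := by
          apply mul_le_mul (hc n)
          · exact mul_le_mul_of_nonneg_left (pow_le_pow_left₀ (abs_nonneg y) hy.le _)
              (Nat.cast_nonneg n)
          · positivity
          · norm_num
      _ = (n:ℝ) * r ^ (n-1) := one_mul _
  · rw [Metric.mem_ball, dist_zero_right, norm_zero]; exact hr0
  · exact summable_series hc (by rw [abs_zero]; norm_num)
  · rw [Metric.mem_ball, dist_zero_right, Real.norm_eq_abs]; exact htr

end Series

open scoped Nat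

lemma const_of_deriv_zero {f : ℝ → ℝ} {s : Set ℝ} (hs : Convex ℝ s) (ho : IsOpen s)
    (hd : ∀ x ∈ s, HasDerivAt f 0 x) {x y : ℝ} (hx : x ∈ s) (hy : y ∈ s) : f x = f y := by
  refine hs.is_const_of_fderivWithin_eq_zero
    (fun z hz => ((hd z hz).differentiableAt).differentiableWithinAt) ?_ hx hy
  intro z hz
  rw [fderivWithin_of_isOpen ho hz, (hd z hz).hasFDerivAt.fderiv]
  ext w
  simp

noncomputable def hfun (x : ℝ) : ℝ := ∑' n : ℕ, bseq n * x ^ n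

lemma hfun_ode {x : ℝ} (hx : |x| < 1) :
    (1 - x) * (∑' n : ℕ, bseq n * (n * x ^ (n - 1))) = 2/3 * hfun x := by
  set S := ∑' n : ℕ, bseq n * (n * x ^ (n - 1)) with hS
  have hsum : Summable (fun n : ℕ => bseq n * (n * x ^ (n - 1))) :=
    summable_deriv_series bseq_abs (le_of_lt (by linarith : |x| < (|x|+1)/2))
      (by positivity) (by linarith)
  have hsum0 : Summable (fun n : ℕ => bseq n * x ^ n) := summable_series bseq_abs hx
  -- reindex : S = ∑' n, bseq (n+1) * ((n+1) * x ^ n)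
  have h1 : S = ∑' n : ℕ, bseq (n + 1) * ((n + 1 : ℕ) * x ^ n) := by
    rw [hS, Summable.tsum_eq_zero_add hsum]
    simp
  -- term identity
  have h2 : ∀ n : ℕ, bseq (n + 1) * ((n + 1 : ℕ) * x ^ n)
      = 2/3 * (bseq n * x ^ n) + x * (bseq n * (n * x ^ (n - 1))) := by
    intro n
    have hrec := bseq_rec n
    have hxn : x * (n * x ^ (n - 1)) = n * x ^ n := by
      match n with
      | 0 => simp
      | (m+1) => rw [Nat.add_sub_cancel, pow_succ]; push_cast; ring
    push_cast
    calc bseq (n + 1) * ((n + 1 : ℝ) * x ^ n) = ((n + 1 : ℝ) * bseq (n+1)) * x ^ n := by ring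
      _ = ((2/3 + n) * bseq n) * x ^ n := by rw [hrec]
      _ = 2/3 * (bseq n * x ^ n) + bseq n * (n * x ^ n) := by ring
      _ = _ := by rw [← hxn]; ring
  have h3 : S = 2/3 * hfun x + x * S := by
    have e := tsum_congr (L := SummationFilter.unconditional (β := ℕ)) h2
    rw [Summable.tsum_add (hsum0.mul_left _) (hsum.mul_left _), tsum_mul_left, tsum_mul_left] at e
    conv_lhs => rw [h1, e]
    rfl
  linarith [h3]

lemma hfun_eq {x : ℝ} (hx : |x| < 1) : hfun x = (1 - x) ^ (-(2/3) : ℝ) := by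
  have h1x : (0:ℝ) < 1 - x := by cases abs_lt.1 hx; linarith
  -- φ has zero derivative on Ioo (-1) 1
  have key : ∀ y ∈ Set.Ioo (-1:ℝ) 1,
      HasDerivAt (fun z => hfun z * (1 - z) ^ ((2:ℝ)/3)) 0 y := by
    intro y hy
    have hy' : |y| < 1 := abs_lt.2 ⟨hy.1, hy.2⟩
    have h1y : (0:ℝ) < 1 - y := by linarith [hy.2]
    have d1 : HasDerivAt hfun (∑' n : ℕ, bseq n * (n * y ^ (n - 1))) y :=
      hasDerivAt_series bseq_abs hy'
    have d2 : HasDerivAt (fun z : ℝ => (1 - z) ^ ((2:ℝ)/3))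
        ((2:ℝ)/3 * (1 - y) ^ ((2:ℝ)/3 - 1) * (-1)) y := by
      have base : HasDerivAt (fun z : ℝ => 1 - z) (-1) y := (hasDerivAt_id y).const_sub 1
      exact (Real.hasDerivAt_rpow_const (p := (2:ℝ)/3) (Or.inl h1y.ne')).comp y base
    have := d1.mul d2
    convert this using 1
    case e'_4 => rfl
    case e'_5 => rfl
    case e'_8 => rfl
    set S := ∑' n : ℕ, bseq n * (n * y ^ (n - 1)) with hS
    have hode := hfun_ode hy'
    -- (1-y)^{2/3} = (1-y) * (1-y)^{2/3-1}
    have hsplit : (1 - y) ^ ((2:ℝ)/3) = (1 - y) * (1 - y) ^ ((2:ℝ)/3 - 1) := by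
      have hxp : (1:ℝ) + ((2:ℝ)/3 - 1) = 2/3 := by norm_num
      calc (1-y) ^ ((2:ℝ)/3) = (1-y) ^ ((1:ℝ) + ((2:ℝ)/3 - 1)) := by rw [hxp]
        _ = (1-y) ^ (1:ℝ) * (1-y) ^ ((2:ℝ)/3 - 1) := Real.rpow_add h1y _ _
        _ = (1-y) * (1-y) ^ ((2:ℝ)/3 - 1) := by rw [Real.rpow_one]
    rw [hsplit]
    have : (1 - y) * S = 2/3 * hfun y := hode
    linear_combination (-(1 - y) ^ ((2:ℝ)/3 - 1)) * this
  have hconst : hfun x * (1 - x) ^ ((2:ℝ)/3) = hfun 0 * (1 - 0) ^ ((2:ℝ)/3) :=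
    const_of_deriv_zero (convex_Ioo _ _) isOpen_Ioo key
      (by constructor <;> cases abs_lt.1 hx <;> linarith) (by norm_num)
  have h0 : hfun 0 = 1 := by
    rw [hfun, tsum_eq_single 0 (fun n hn => by simp [zero_pow hn])]
    simp [bseq]
  rw [h0] at hconst
  simp only [sub_zero, Real.one_rpow, one_mul, mul_one] at hconst
  have hne : (1 - x) ^ ((2:ℝ)/3) ≠ 0 := (Real.rpow_pos_of_pos h1x _).ne'
  rw [Real.rpow_neg h1x.le]
  field_simp at hconst ⊢
  linarith [hconst]

noncomputable def kC : ℝ := Real.Gamma (2/3) / (Real.Gamma (4/3) * Real.Gamma (1/3))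

noncomputable def fint (t : ℝ) : ℝ := t ^ (-(2/3) : ℝ) * (1 - t) ^ (-(2/3) : ℝ)

lemma aux_ode {x : ℝ} (hx : |x| < 1) :
    1/3 * (∑' n : ℕ, aseq n * x ^ n) + x * (∑' n : ℕ, aseq n * (n * x ^ (n - 1)))
      = 1/3 * (1 - x) ^ (-(2/3) : ℝ) := by
  have hsum : Summable (fun n : ℕ => aseq n * (n * x ^ (n - 1))) :=
    summable_deriv_series aseq_abs (le_of_lt (by linarith : |x| < (|x|+1)/2))
      (by positivity) (by linarith)
  have hsum0 : Summable (fun n : ℕ => aseq n * x ^ n) := summable_series aseq_abs hx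
  have h2 : ∀ n : ℕ, 1/3 * (aseq n * x ^ n) + x * (aseq n * (n * x ^ (n - 1)))
      = 1/3 * (bseq n * x ^ n) := by
    intro n
    have hxn : x * ((n : ℝ) * x ^ (n - 1)) = n * x ^ n := by
      match n with
      | 0 => simp
      | (m+1) => rw [Nat.add_sub_cancel, pow_succ]; push_cast; ring
    have hkey := aseq_key n
    calc 1/3 * (aseq n * x ^ n) + x * (aseq n * ((n:ℝ) * x ^ (n - 1)))
        = 1/3 * (aseq n * x ^ n) + aseq n * (x * ((n:ℝ) * x ^ (n - 1))) := by ring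
      _ = 1/3 * (aseq n * x ^ n) + aseq n * ((n:ℝ) * x ^ n) := by rw [hxn]
      _ = ((1/3 + n) * aseq n) * x ^ n := by ring
      _ = (1/3 * bseq n) * x ^ n := by rw [hkey]
      _ = 1/3 * (bseq n * x ^ n) := by ring
  have e1 : (∑' n : ℕ, (1/3 * (aseq n * x ^ n) + x * (aseq n * (n * x ^ (n - 1)))))
      = 1/3 * (∑' n : ℕ, aseq n * x ^ n) + x * (∑' n : ℕ, aseq n * (n * x ^ (n - 1))) := by
    rw [Summable.tsum_add (hsum0.mul_left _) (hsum.mul_left _), tsum_mul_left, tsum_mul_left]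
  have e2 : (∑' n : ℕ, (1/3 * (aseq n * x ^ n) + x * (aseq n * (n * x ^ (n - 1)))))
      = 1/3 * (1 - x) ^ (-(2/3) : ℝ) := by
    rw [tsum_congr h2, tsum_mul_left, ← hfun_eq hx]
    rfl
  rw [← e1, e2]

lemma cardy_hasDeriv {s : ℝ} (hs : s ∈ Set.Ioo (0:ℝ) 1) :
    HasDerivAt cardy (kC/3 * fint s) s := by
  obtain ⟨hs0, hs1⟩ := hs
  have hs' : |s| < 1 := by rw [abs_of_pos hs0]; exact hs1
  have dpow : HasDerivAt (fun x : ℝ => x ^ ((1:ℝ)/3)) ((1:ℝ)/3 * s ^ ((1:ℝ)/3 - 1)) s :=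
    Real.hasDerivAt_rpow_const (Or.inl hs0.ne')
  have dH : HasDerivAt (fun x : ℝ => ∑' n : ℕ, aseq n * x ^ n)
      (∑' n : ℕ, aseq n * (n * s ^ (n - 1))) s := hasDerivAt_series aseq_abs hs'
  have total := (dpow.const_mul kC).mul dH
  have hcardy : cardy = fun x : ℝ => kC * x ^ ((1:ℝ)/3) * ∑' n : ℕ, aseq n * x ^ n := rfl
  rw [hcardy]
  convert total using 1
  case e'_4 => rfl
  case e'_5 => rfl
  case e'_8 => rfl
  set Hs := ∑' n : ℕ, aseq n * s ^ n
  set S := ∑' n : ℕ, aseq n * (n * s ^ (n - 1))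
  have hode := aux_ode hs'
  have hexp1 : s ^ ((1:ℝ)/3 - 1) = s ^ (-(2/3) : ℝ) := by norm_num
  have hexp2 : s ^ ((1:ℝ)/3) = s * s ^ (-(2/3) : ℝ) := by
    have h := Real.rpow_add hs0 1 (-(2/3) : ℝ)
    rw [Real.rpow_one] at h
    rw [show (1:ℝ)/3 = 1 + (-(2/3) : ℝ) by norm_num, h]
  rw [fint, hexp1, hexp2]
  linear_combination (-(kC * s ^ (-(2/3) : ℝ))) * hode

lemma fint_meas : Measurable fint := by
  unfold fint; fun_prop

lemma fint_symm (x : ℝ) : fint (1 - x) = fint x := by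
  unfold fint; rw [sub_sub_cancel]; ring

lemma fint_int_left : IntervalIntegrable fint MeasureTheory.volume 0 (1/2) := by
  have hg : IntervalIntegrable (fun t : ℝ => t ^ (-(2/3):ℝ) * (2:ℝ) ^ ((2:ℝ)/3))
      MeasureTheory.volume 0 (1/2) :=
    (intervalIntegral.intervalIntegrable_rpow' (by norm_num)).mul_const _
  refine hg.mono_fun fint_meas.stronglyMeasurable.aestronglyMeasurable.restrict ?_
  rw [Set.uIoc_of_le (by norm_num : (0:ℝ) ≤ 1/2)]
  filter_upwards [MeasureTheory.ae_restrict_mem measurableSet_Ioc] with x hx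
  obtain ⟨hx0, hx2⟩ := hx
  have h1x : (0:ℝ) < 1 - x := by linarith
  have hb1 : (1 - x) ^ (-(2/3):ℝ) ≤ (1/2 : ℝ) ^ (-(2/3):ℝ) :=
    Real.rpow_le_rpow_of_nonpos (by norm_num) (by linarith) (by norm_num)
  have hb2 : ((1:ℝ)/2) ^ (-(2/3):ℝ) = (2:ℝ) ^ ((2:ℝ)/3) := by
    rw [show ((1:ℝ)/2) = (2:ℝ)⁻¹ by norm_num, Real.inv_rpow (by norm_num),
      ← Real.rpow_neg (by norm_num)]
    norm_num
  rw [Real.norm_eq_abs, Real.norm_eq_abs, fint]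
  have hp1 : (0:ℝ) ≤ x ^ (-(2/3):ℝ) := Real.rpow_nonneg hx0.le _
  have hp2 : (0:ℝ) ≤ (1-x) ^ (-(2/3):ℝ) := Real.rpow_nonneg h1x.le _
  rw [abs_of_nonneg (mul_nonneg hp1 hp2), abs_of_nonneg (by positivity)]
  calc x ^ (-(2/3):ℝ) * (1-x) ^ (-(2/3):ℝ) ≤ x ^ (-(2/3):ℝ) * ((1/2:ℝ) ^ (-(2/3):ℝ)) :=
        mul_le_mul_of_nonneg_left hb1 hp1
    _ = x ^ (-(2/3):ℝ) * (2:ℝ) ^ ((2:ℝ)/3) := by rw [hb2]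

lemma fint_int_right : IntervalIntegrable fint MeasureTheory.volume (1/2) 1 := by
  have h2 : IntervalIntegrable (fun x => fint (1 - x)) MeasureTheory.volume (1/2) 1 := by
    have h := (fint_int_left.comp_sub_left 1).symm
    norm_num at h
    exact h
  simpa only [fint_symm] using h2

lemma fint_int01 : IntervalIntegrable fint MeasureTheory.volume 0 1 :=
  fint_int_left.trans fint_int_right

lemma J_val : ∫ t in (0:ℝ)..1, fint t = Real.Gamma (1/3) ^ 2 / Real.Gamma (2/3) := by
  have hβ := Complex.Gamma_mul_Gamma_eq_betaIntegral
    (s := ((1/3:ℝ):ℂ)) (t := ((1/3:ℝ):ℂ))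
    (by rw [Complex.ofReal_re]; norm_num) (by rw [Complex.ofReal_re]; norm_num)
  have hbeta : Complex.betaIntegral ((1/3:ℝ):ℂ) ((1/3:ℝ):ℂ)
      = ((∫ t in (0:ℝ)..1, fint t : ℝ) : ℂ) := by
    rw [Complex.betaIntegral, ← intervalIntegral.integral_ofReal]
    refine intervalIntegral.integral_congr ?_
    intro x hx
    rw [Set.uIcc_of_le (by norm_num : (0:ℝ) ≤ 1)] at hx
    obtain ⟨hx0, hx1⟩ := hx
    have he : ((1/3:ℝ):ℂ) - 1 = ((-(2/3):ℝ):ℂ) := by push_cast; norm_num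
    have h1x : (0:ℝ) ≤ 1 - x := by linarith
    simp only [fint]
    rw [Complex.ofReal_mul, Complex.ofReal_cpow hx0, Complex.ofReal_cpow h1x, he]
    push_cast
    ring
  rw [hbeta] at hβ
  have hsum : ((1/3:ℝ):ℂ) + ((1/3:ℝ):ℂ) = ((2/3:ℝ):ℂ) := by push_cast; norm_num
  rw [hsum, Complex.Gamma_ofReal, Complex.Gamma_ofReal] at hβ
  have hre : (Real.Gamma (1/3) * Real.Gamma (1/3) : ℝ)
      = Real.Gamma (2/3) * ∫ t in (0:ℝ)..1, fint t := by
    have := hβ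
    rw [← Complex.ofReal_mul, ← Complex.ofReal_mul] at this
    exact_mod_cast this
  have hΓ : (0:ℝ) < Real.Gamma (2/3) := Real.Gamma_pos_of_pos (by norm_num)
  field_simp
  nlinarith [hre]

open MeasureTheory in
lemma P_hasDeriv {x : ℝ} (hx : x ∈ Set.Ioo (0:ℝ) 1) :
    HasDerivAt (fun u => ∫ t in (0:ℝ)..u, fint t) (fint x) x := by
  obtain ⟨hx0, hx1⟩ := hx
  refine intervalIntegral.integral_hasDerivAt_right
    (fint_int01.mono_set ?_) fint_meas.stronglyMeasurable.stronglyMeasurableAtFilter ?_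
  · exact Set.uIcc_subset_uIcc (Set.left_mem_uIcc)
      (by rw [Set.uIcc_of_le (by norm_num : (0:ℝ) ≤ 1)]; exact ⟨hx0.le, hx1.le⟩)
  · have c1 : ContinuousAt (fun t : ℝ => t ^ (-(2/3):ℝ)) x :=
      Real.continuousAt_rpow_const x _ (Or.inl hx0.ne')
    have c2 : ContinuousAt (fun t : ℝ => (1 - t) ^ (-(2/3):ℝ)) x := by
      have : ContinuousAt (fun t : ℝ => (1:ℝ) - t) x := (continuous_const.sub continuous_id).continuousAt
      exact this.rpow_const (Or.inl (ne_of_gt (by linarith : (0:ℝ) < 1 - x)))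
    exact c1.mul c2

lemma nebot_Ioo : (nhdsWithin (0:ℝ) (Set.Ioo (0:ℝ) 1)).NeBot := by
  rw [← mem_closure_iff_nhdsWithin_neBot, closure_Ioo (by norm_num : (0:ℝ) ≠ 1)]
  exact ⟨le_refl 0, by norm_num⟩

lemma P_tendsto_zero :
    Filter.Tendsto (fun u => ∫ t in (0:ℝ)..u, fint t)
      (nhdsWithin (0:ℝ) (Set.Ioo (0:ℝ) 1)) (nhds 0) := by
  have hic : MeasureTheory.IntegrableOn fint (Set.uIcc (0:ℝ) 1) := by
    rw [Set.uIcc_of_le (by norm_num : (0:ℝ) ≤ 1)]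
    exact (intervalIntegrable_iff_integrableOn_Icc_of_le (by norm_num)).mp fint_int01
  have hcont := intervalIntegral.continuousOn_primitive_interval hic
  have h0 : (0:ℝ) ∈ Set.uIcc (0:ℝ) 1 := Set.left_mem_uIcc
  have := (hcont 0 h0).tendsto
  rw [intervalIntegral.integral_same] at this
  refine this.mono_left (nhdsWithin_mono 0 ?_)
  rw [Set.uIcc_of_le (by norm_num : (0:ℝ) ≤ 1)]
  exact Set.Ioo_subset_Icc_self

lemma cardy_tendsto_zero :
    Filter.Tendsto cardy (nhdsWithin (0:ℝ) (Set.Ioo (0:ℝ) 1)) (nhds 0) := by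
  have hg : Filter.Tendsto (fun y : ℝ => 2 * |kC| * y ^ ((1:ℝ)/3))
      (nhdsWithin (0:ℝ) (Set.Ioo (0:ℝ) 1)) (nhds 0) := by
    have hc : ContinuousAt (fun y : ℝ => y ^ ((1:ℝ)/3)) 0 :=
      Real.continuousAt_rpow_const 0 _ (Or.inr (by norm_num))
    have := (hc.tendsto.const_mul (2 * |kC|)).mono_left
      (nhdsWithin_le_nhds (s := Set.Ioo (0:ℝ) 1))
    rw [Real.zero_rpow (by norm_num : (1:ℝ)/3 ≠ 0), mul_zero] at this
    exact this
  refine squeeze_zero_norm' ?_ hg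
  have hev : ∀ᶠ y in nhdsWithin (0:ℝ) (Set.Ioo (0:ℝ) 1),
      y ∈ Set.Ioo (0:ℝ) 1 ∧ y < 1/2 := by
    refine Filter.Eventually.and eventually_mem_nhdsWithin ?_
    exact eventually_nhdsWithin_of_eventually_nhds
      (Filter.Tendsto.eventually_lt_const (by norm_num) Filter.tendsto_id)
  filter_upwards [hev] with y ⟨⟨hy0, hy1⟩, hy2⟩
  have hHy : |∑' n : ℕ, aseq n * y ^ n| ≤ 2 := by
    have hsn : Summable (fun n : ℕ => |aseq n * y ^ n|) := by
      have := summable_series aseq_abs (by rw [abs_of_pos hy0]; linarith : |y| < 1)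
      exact this.abs
    calc |∑' n : ℕ, aseq n * y ^ n| ≤ ∑' n : ℕ, |aseq n * y ^ n| := by
          simpa only [Real.norm_eq_abs] using
            norm_tsum_le_tsum_norm (f := fun n : ℕ => aseq n * y ^ n)
              (by simpa only [Real.norm_eq_abs] using hsn)
      _ ≤ ∑' n : ℕ, (1/2:ℝ) ^ n := by
          refine Summable.tsum_le_tsum ?_ hsn (summable_geometric_of_lt_one (by norm_num) (by norm_num))
          intro n
          rw [abs_mul, abs_pow, abs_of_pos hy0]
          calc |aseq n| * y ^ n ≤ 1 * (1/2:ℝ) ^ n := by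
                apply mul_le_mul (aseq_abs n) (pow_le_pow_left₀ hy0.le hy2.le n)
                  (by positivity) (by norm_num)
            _ = (1/2:ℝ) ^ n := one_mul _
      _ = 2 := by
          rw [tsum_geometric_of_lt_one (by norm_num) (by norm_num)]
          norm_num
  have hcy : cardy y = kC * y ^ ((1:ℝ)/3) * ∑' n : ℕ, aseq n * y ^ n := rfl
  rw [hcy, Real.norm_eq_abs, abs_mul, abs_mul]
  have hyp : |y ^ ((1:ℝ)/3)| = y ^ ((1:ℝ)/3) := abs_of_nonneg (Real.rpow_nonneg hy0.le _)
  rw [hyp]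
  calc |kC| * y ^ ((1:ℝ)/3) * |∑' n : ℕ, aseq n * y ^ n|
      ≤ |kC| * y ^ ((1:ℝ)/3) * 2 := by
        apply mul_le_mul_of_nonneg_left hHy (by positivity)
    _ = 2 * |kC| * y ^ ((1:ℝ)/3) := by ring

lemma cardy_eq_integral {s : ℝ} (hs : s ∈ Set.Ioo (0:ℝ) 1) :
    cardy s = kC/3 * ∫ t in (0:ℝ)..s, fint t := by
  set D : ℝ → ℝ := fun x => cardy x - kC/3 * ∫ t in (0:ℝ)..x, fint t with hD
  have hD' : ∀ x ∈ Set.Ioo (0:ℝ) 1, HasDerivAt D 0 x := by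
    intro x hx
    have := (cardy_hasDeriv hx).sub ((P_hasDeriv hx).const_mul (kC/3))
    simp at this; exact this
  have hconst : ∀ y ∈ Set.Ioo (0:ℝ) 1, D y = D s :=
    fun y hy => const_of_deriv_zero (convex_Ioo _ _) isOpen_Ioo hD' hy hs
  have htend : Filter.Tendsto D (nhdsWithin (0:ℝ) (Set.Ioo (0:ℝ) 1)) (nhds 0) := by
    have := cardy_tendsto_zero.sub (P_tendsto_zero.const_mul (kC/3))
    simpa using this
  have htend2 : Filter.Tendsto D (nhdsWithin (0:ℝ) (Set.Ioo (0:ℝ) 1)) (nhds (D s)) := by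
    refine Filter.Tendsto.congr' ?_ (tendsto_const_nhds (x := D s))
    filter_upwards [eventually_mem_nhdsWithin] with y hy
    exact (hconst y hy).symm
  haveI := nebot_Ioo
  have : D s = 0 := tendsto_nhds_unique htend2 htend
  rw [hD] at this
  linarith [this]

/-- Cardy's formula satisfies the duality cardy(s) + cardy(1-s) = 1 on (0,1). -/
theorem cardy_duality (s : ℝ) (hs : s ∈ Set.Ioo (0:ℝ) 1) :
    cardy s + cardy (1 - s) = 1 := by
  obtain ⟨hs0, hs1⟩ := hs
  have hs' : (1 - s) ∈ Set.Ioo (0:ℝ) 1 := ⟨by linarith, by linarith⟩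
  rw [cardy_eq_integral ⟨hs0, hs1⟩, cardy_eq_integral hs']
  have hsub : (∫ t in (0:ℝ)..(1-s), fint t) = ∫ t in s..1, fint t := by
    have h := intervalIntegral.integral_comp_sub_left (a := (0:ℝ)) (b := 1-s) fint 1
    simp only [fint_symm] at h
    rw [h, sub_sub_cancel, sub_zero]
  rw [hsub]
  have hadd : (∫ t in (0:ℝ)..s, fint t) + ∫ t in s..1, fint t = ∫ t in (0:ℝ)..1, fint t := by
    refine intervalIntegral.integral_add_adjacent_intervals ?_ ?_
    · refine fint_int01.mono_set (Set.uIcc_subset_uIcc Set.left_mem_uIcc ?_)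
      rw [Set.uIcc_of_le (by norm_num : (0:ℝ) ≤ 1)]
      exact ⟨hs0.le, hs1.le⟩
    · refine fint_int01.mono_set (Set.uIcc_subset_uIcc ?_ Set.right_mem_uIcc)
      rw [Set.uIcc_of_le (by norm_num : (0:ℝ) ≤ 1)]
      exact ⟨hs0.le, hs1.le⟩
  rw [show kC/3 * (∫ t in (0:ℝ)..s, fint t) + kC/3 * (∫ t in s..1, fint t)
      = kC/3 * ((∫ t in (0:ℝ)..s, fint t) + ∫ t in s..1, fint t) by ring, hadd, J_val]
  have hΓ1 : (0:ℝ) < Real.Gamma (1/3) := Real.Gamma_pos_of_pos (by norm_num)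
  have hΓ2 : (0:ℝ) < Real.Gamma (2/3) := Real.Gamma_pos_of_pos (by norm_num)
  have hΓ4 : Real.Gamma (4/3) = 1/3 * Real.Gamma (1/3) := by
    rw [show (4:ℝ)/3 = 1/3 + 1 by norm_num, Real.Gamma_add_one (by norm_num)]
  rw [kC, hΓ4]
  field_simp
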